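/- arXiv:2508.04822 — 2 statements merged into one kernel-verified Lean document; each statement's English description precedes it below -/
import Mathlib

section
/- Let u(x) = (∑_j θ_j(x^(j)))^k where each θ_j: ℝ₊ → ℝ₊ is twice differentiable and homogeneous of degree r. If r ∈ (0,1) and k ∈ (0, 1/r], or r < 0 and k ∈ [1/r, 0), then u is concave on the open positive orthant. -/
/-!
Homogeneity gives `θ_j t = θ_j 1 * t ^ r`, so `u = M ^ (r k)` with `M = G ^ r⁻¹` and
`G x = ∑ θ_j 1 * x_j ^ r`. The function `M` is positive and homogeneous of degree one, and its
superlevel set `{M ≥ 1}` is `{G ≥ 1}` with `G` concave when `0 < r < 1`, or `{G ≤ 1}` with `G`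
convex when `r < 0`; a positive one-homogeneous function with convex superlevel set is concave.
Since `0 < r k ≤ 1`, composing with the concave increasing map `t ↦ t ^ (r k)` keeps concavity.
-/

open Real Set

theorem convexOn_rpow_of_nonpos {p : ℝ} (hp : p ≤ 0) :
    ConvexOn ℝ (Ioi 0) fun x : ℝ ↦ x ^ p := by
  have hlog : ConvexOn ℝ (Ioi 0) fun x ↦ log x * p := by
    simpa [mul_comm, smul_eq_mul] using
      strictConcaveOn_log_Ioi.concaveOn.neg.smul (neg_nonneg.2 hp)
  refine ⟨convex_Ioi 0, fun x hx y hy a b ha hb hab ↦ ?_⟩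
  have hxy : a • x + b • y ∈ Ioi 0 := convex_Ioi 0 hx hy ha hb hab
  simp only [rpow_def_of_pos hx, rpow_def_of_pos hy, rpow_def_of_pos hxy]
  calc exp (log (a • x + b • y) * p) ≤ exp (a • (log x * p) + b • (log y * p)) :=
        exp_le_exp.2 (hlog.2 hx hy ha hb hab)
    _ ≤ a • exp (log x * p) + b • exp (log y * p) :=
        convexOn_exp.2 (mem_univ _) (mem_univ _) ha hb hab

theorem ConcaveOn.rpow {E : Type*} [AddCommGroup E] [Module ℝ E] {s : Set E} {f : E → ℝ}
    (hf : ConcaveOn ℝ s f) (hf₀ : ∀ x ∈ s, 0 ≤ f x) {p : ℝ} (hp₀ : 0 ≤ p) (hp₁ : p ≤ 1) :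
    ConcaveOn ℝ s fun x ↦ f x ^ p := by
  refine ⟨hf.1, fun x hx y hy a b ha hb hab ↦ ?_⟩
  calc a • f x ^ p + b • f y ^ p ≤ (a • f x + b • f y) ^ p :=
        (concaveOn_rpow hp₀ hp₁).2 (hf₀ x hx) (hf₀ y hy) ha hb hab
    _ ≤ f (a • x + b • y) ^ p :=
        rpow_le_rpow (convex_Ici (0 : ℝ) (hf₀ x hx) (hf₀ y hy) ha hb hab)
          (hf.2 hx hy ha hb hab) hp₀

/- `a • x + b • y` is a positive multiple of a convex combination of `x / M x` and `y / M y`,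
both of which lie on the level set `{M = 1}`. -/
theorem concaveOn_of_convex_superlevel_of_homogeneous {E : Type*} [AddCommGroup E]
    [Module ℝ E] {s : Set E} {M : E → ℝ} (hs : ∀ x ∈ s, ∀ t : ℝ, 0 < t → t • x ∈ s)
    (hpos : ∀ x ∈ s, 0 < M x) (hhom : ∀ x ∈ s, ∀ t : ℝ, 0 < t → M (t • x) = t * M x)
    (hconv : Convex ℝ {x ∈ s | 1 ≤ M x}) : ConcaveOn ℝ s M := by
  have hnormalize : ∀ x ∈ s, (M x)⁻¹ • x ∈ {x ∈ s | 1 ≤ M x} := fun x hx ↦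
    ⟨hs x hx _ (inv_pos.2 (hpos x hx)), by
      rw [hhom x hx _ (inv_pos.2 (hpos x hx)), inv_mul_cancel₀ (hpos x hx).ne']⟩
  have key : ∀ x ∈ s, ∀ y ∈ s, ∀ a b : ℝ, 0 ≤ a → 0 ≤ b → a + b = 1 →
      a • x + b • y ∈ s ∧ a • M x + b • M y ≤ M (a • x + b • y) := by
    intro x hx y hy a b ha hb hab
    set C := a * M x + b * M y
    have hC : 0 < C := convex_Ioi (0 : ℝ) (hpos x hx) (hpos y hy) ha hb hab
    have hz := hconv (hnormalize x hx) (hnormalize y hy)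
      (div_nonneg (mul_nonneg ha (hpos x hx).le) hC.le)
      (div_nonneg (mul_nonneg hb (hpos y hy).le) hC.le)
      (by rw [← add_div, div_self hC.ne'])
    have hxy : a • x + b • y =
        C • ((a * M x / C) • (M x)⁻¹ • x + (b * M y / C) • (M y)⁻¹ • y) := by
      have hMx := (hpos x hx).ne'
      have hMy := (hpos y hy).ne'
      rw [smul_add, smul_smul, smul_smul, smul_smul, smul_smul]
      congr 2 <;> field_simp
    rw [hxy, hhom _ hz.1 C hC]
    exact ⟨hs _ hz.1 C hC, le_mul_of_one_le_right hC.le hz.2⟩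
  exact ⟨fun x hx y hy a b ha hb hab ↦ (key x hx y hy a b ha hb hab).1,
    fun x hx y hy a b ha hb hab ↦ (key x hx y hy a b ha hb hab).2⟩

section PowerSum

variable {ι : Type*} [Fintype ι]

theorem ConcaveOn.sum_mul_apply {S : Set ℝ} {f : ℝ → ℝ} (hf : ConcaveOn ℝ S f) {c : ι → ℝ}
    (hc : ∀ i, 0 ≤ c i) : ConcaveOn ℝ {x : ι → ℝ | ∀ i, x i ∈ S} fun x ↦ ∑ i, c i * f (x i) := by
  refine ⟨fun x hx y hy a b ha hb hab i ↦ hf.1 (hx i) (hy i) ha hb hab,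
    fun x hx y hy a b ha hb hab ↦ ?_⟩
  simp only [smul_eq_mul, Finset.mul_sum, ← Finset.sum_add_distrib]
  refine Finset.sum_le_sum fun i _ ↦ ?_
  calc a * (c i * f (x i)) + b * (c i * f (y i)) = c i * (a • f (x i) + b • f (y i)) := by
        simp only [smul_eq_mul]; ring
    _ ≤ c i * f ((a • x + b • y) i) :=
        mul_le_mul_of_nonneg_left (hf.2 (hx i) (hy i) ha hb hab) (hc i)

theorem ConvexOn.sum_mul_apply {S : Set ℝ} {f : ℝ → ℝ} (hf : ConvexOn ℝ S f) {c : ι → ℝ}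
    (hc : ∀ i, 0 ≤ c i) : ConvexOn ℝ {x : ι → ℝ | ∀ i, x i ∈ S} fun x ↦ ∑ i, c i * f (x i) := by
  have h := hf.neg.sum_mul_apply hc
  simp only [Pi.neg_apply, mul_neg, Finset.sum_neg_distrib] at h
  exact neg_concaveOn_iff.1 h

noncomputable def powerSum (c : ι → ℝ) (r : ℝ) (x : ι → ℝ) : ℝ := ∑ i, c i * x i ^ r

theorem powerSum_smul (c : ι → ℝ) (r : ℝ) {x : ι → ℝ} (hx : ∀ i, 0 ≤ x i) {t : ℝ}
    (ht : 0 ≤ t) : powerSum c r (t • x) = t ^ r * powerSum c r x := by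
  simp only [powerSum, Pi.smul_apply, smul_eq_mul, mul_rpow ht (hx _), Finset.mul_sum]
  exact Finset.sum_congr rfl fun i _ ↦ by ring

theorem concaveOn_powerSum_rpow_inv {c : ι → ℝ} (hc : ∀ i, 0 ≤ c i) {r : ℝ} (hr₀ : r ≠ 0)
    (hr₁ : r < 1) (hpos : ∀ x : ι → ℝ, (∀ i, 0 < x i) → 0 < powerSum c r x) :
    ConcaveOn ℝ {x : ι → ℝ | ∀ i, 0 < x i} fun x ↦ powerSum c r x ^ r⁻¹ := by
  refine concaveOn_of_convex_superlevel_of_homogeneous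
    (fun x hx t ht i ↦ mul_pos ht (hx i)) (fun x hx ↦ rpow_pos_of_pos (hpos x hx) _)
    (fun x hx t ht ↦ ?_) ?_
  · rw [powerSum_smul c r (fun i ↦ (hx i).le) ht.le,
      mul_rpow (rpow_nonneg ht.le r) (hpos x hx).le, rpow_rpow_inv ht.le hr₀]
  rcases hr₀.lt_or_gt with hr | hr
  · have hlevel : {x ∈ {x : ι → ℝ | ∀ i, 0 < x i} | 1 ≤ powerSum c r x ^ r⁻¹} =
        {x ∈ {x : ι → ℝ | ∀ i, 0 < x i} | powerSum c r x ≤ 1} := by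
      ext x
      refine and_congr_right fun hx ↦ ?_
      rw [le_rpow_inv_iff_of_neg one_pos (hpos x hx) hr, one_rpow]
    rw [hlevel]
    exact ((convexOn_rpow_of_nonpos hr.le).sum_mul_apply hc).convex_le 1
  · have hlevel : {x ∈ {x : ι → ℝ | ∀ i, 0 < x i} | 1 ≤ powerSum c r x ^ r⁻¹} =
        {x ∈ {x : ι → ℝ | ∀ i, 0 < x i} | 1 ≤ powerSum c r x} := by
      ext x
      refine and_congr_right fun hx ↦ ?_
      rw [le_rpow_inv_iff_of_pos zero_le_one (hpos x hx).le hr, one_rpow]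
    rw [hlevel]
    exact (((concaveOn_rpow hr.le hr₁.le).subset Ioi_subset_Ici_self (convex_Ioi 0)).sum_mul_apply
      hc).convex_ge 1

end PowerSum

theorem stmt7_general (n : ℕ) (r k : ℝ)
    (θ : Fin n → ℝ → ℝ)
    (hnneg : ∀ j, ∀ t : ℝ, 0 < t → 0 ≤ θ j t)
    (hhom : ∀ j, ∀ α : ℝ, 0 < α → ∀ t : ℝ, 0 < t → θ j (α * t) = α ^ r * θ j t)
    (hpos : ∀ x : Fin n → ℝ, (∀ i, 0 < x i) → 0 < ∑ j, θ j (x j))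
    (hkr : (0 < r ∧ r < 1 ∧ 0 < k ∧ k ≤ 1 / r) ∨ (r < 0 ∧ 1 / r ≤ k ∧ k < 0)) :
    ConcaveOn ℝ {x : Fin n → ℝ | ∀ i, 0 < x i}
      (fun x => (∑ j, θ j (x j)) ^ k) := by
  obtain ⟨hr₀, hr₁, hd₀, hd₁⟩ : r ≠ 0 ∧ r < 1 ∧ 0 ≤ r * k ∧ r * k ≤ 1 := by
    rcases hkr with ⟨hr, hr₁, hk, hkr⟩ | ⟨hr, hkr, hk⟩
    · refine ⟨hr.ne', hr₁, by positivity, ?_⟩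
      calc r * k ≤ r * (1 / r) := by gcongr
        _ = 1 := mul_one_div_cancel hr.ne'
    · refine ⟨hr.ne, by linarith, (mul_pos_of_neg_of_neg hr hk).le, ?_⟩
      calc r * k ≤ r * (1 / r) := mul_le_mul_of_nonpos_left hkr hr.le
        _ = 1 := mul_one_div_cancel hr.ne
  have hsum : ∀ x : Fin n → ℝ, (∀ i, 0 < x i) →
      ∑ j, θ j (x j) = powerSum (fun j ↦ θ j 1) r x := fun x hx ↦
    Finset.sum_congr rfl fun j _ ↦ by simpa [mul_comm] using hhom j (x j) (hx j) 1 one_pos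
  have hG : ∀ x : Fin n → ℝ, (∀ i, 0 < x i) → 0 < powerSum (fun j ↦ θ j 1) r x :=
    fun x hx ↦ hsum x hx ▸ hpos x hx
  refine ((concaveOn_powerSum_rpow_inv (fun j ↦ hnneg j 1 one_pos) hr₀ hr₁ hG).rpow
    (fun x hx ↦ (rpow_pos_of_pos (hG x hx) _).le) hd₀ hd₁).congr fun x hx ↦ ?_
  dsimp only
  rw [hsum x hx, ← rpow_mul (hG x hx).le, inv_mul_cancel_left₀ hr₀]

/-- concavity of additively homogeneous utilities
`u(x) = (∑_j θ_j(x_j))^k` under the spectrum conditions on `(k, r)`. -/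
theorem stmt7 (n : ℕ) (r k : ℝ)
    (θ : Fin n → ℝ → ℝ)
    (hsm : ∀ j, ContDiffOn ℝ 2 (θ j) (Set.Ioi (0 : ℝ)))
    (hnneg : ∀ j, ∀ t : ℝ, 0 < t → 0 ≤ θ j t)
    (hhom : ∀ j, ∀ α : ℝ, 0 < α → ∀ t : ℝ, 0 < t → θ j (α * t) = α ^ r * θ j t)
    (hpos : ∀ x : Fin n → ℝ, (∀ i, 0 < x i) → 0 < ∑ j, θ j (x j))
    (hkr : (0 < r ∧ r < 1 ∧ 0 < k ∧ k ≤ 1 / r) ∨ (r < 0 ∧ 1 / r ≤ k ∧ k < 0)) :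
    ConcaveOn ℝ {x : Fin n → ℝ | ∀ i, 0 < x i}
      (fun x => (∑ j, θ j (x j)) ^ k) :=
  stmt7_general n r k θ hnneg hhom hpos hkr
end

section
/- If a sequence t_0 = 1, t_1, t_2, … of nonnegative reals satisfies t_{k+1} ≤ t_k·(1 - c/Δ_k) whenever t_{k+1} > 0, where Δ_k = φ_k - φ_{k+1} > 0 and φ_k is a nonincreasing real sequence with φ_0 - φ* < ∞ bounding ∑ Δ_j, then t_{k+1} ≤ (1 - c(k+1)/(φ_0 - φ_{k+1}))^{k+1} for all k, by the AM–GM and harmonic-mean inequalities applied to the product ∏_{j=0}^k (1 - c/Δ_j). -/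
/-!
Unrolling the recursion bounds `t (k+1)` by `∏_{j ≤ k} (1 - c/Δ_j)`. By AM–GM this product is at
most the `(k+1)`-th power of the arithmetic mean `1 - (c/(k+1)) ∑ 1/Δ_j` of its factors, and by
the AM–HM inequality `∑ 1/Δ_j ≥ (k+1)² / ∑ Δ_j`, where `∑_{j ≤ k} Δ_j = φ 0 - φ (k+1)` telescopes.
-/

open Finset

namespace Real

variable {ι : Type*} (s : Finset ι)

theorem prod_le_arith_mean_pow {z : ι → ℝ} (hz : ∀ i ∈ s, 0 ≤ z i) :
    ∏ i ∈ s, z i ≤ ((∑ i ∈ s, z i) / #s) ^ #s := by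
  rcases s.eq_empty_or_nonempty with rfl | hs
  · simp
  have hmean := geom_mean_le_arith_mean s (fun _ ↦ 1) z (fun _ _ ↦ zero_le_one)
    (by simpa using hs) hz
  simp only [rpow_one, one_mul, sum_const, nsmul_eq_mul, mul_one] at hmean
  have hprod : 0 ≤ ∏ i ∈ s, z i := prod_nonneg hz
  calc ∏ i ∈ s, z i = ((∏ i ∈ s, z i) ^ (#s : ℝ)⁻¹) ^ #s := by
        rw [← rpow_natCast, ← rpow_mul hprod, inv_mul_cancel₀ (by simpa using hs.ne_empty),
          rpow_one]
    _ ≤ ((∑ i ∈ s, z i) / #s) ^ #s := pow_le_pow_left₀ (rpow_nonneg hprod _) hmean _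

theorem card_sq_div_sum_le_sum_inv {Δ : ι → ℝ} (hΔ : ∀ i ∈ s, 0 < Δ i) :
    (#s : ℝ) ^ 2 / ∑ i ∈ s, Δ i ≤ ∑ i ∈ s, (Δ i)⁻¹ := by
  simpa using sq_sum_div_le_sum_sq_div s (fun _ ↦ (1 : ℝ)) hΔ

theorem arith_mean_one_sub_div_le {c : ℝ} (hc : 0 ≤ c) {Δ : ι → ℝ} (hΔ : ∀ i ∈ s, 0 < Δ i) :
    (∑ i ∈ s, (1 - c / Δ i)) / #s ≤ 1 - c * #s / ∑ i ∈ s, Δ i := by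
  rcases s.eq_empty_or_nonempty with rfl | hs
  · simp
  have hcard : (0 : ℝ) < #s := by simpa using hs.card_pos
  have hsum : ∑ i ∈ s, (1 - c / Δ i) = #s - c * ∑ i ∈ s, (Δ i)⁻¹ := by
    simp [sum_sub_distrib, mul_sum, div_eq_mul_inv]
  have hharm : (#s : ℝ) / ∑ i ∈ s, Δ i ≤ (∑ i ∈ s, (Δ i)⁻¹) / #s := by
    rw [le_div_iff₀ hcard, div_mul_eq_mul_div, ← sq]
    exact card_sq_div_sum_le_sum_inv s hΔ
  rw [hsum, sub_div, div_self hcard.ne', mul_div_assoc, mul_div_assoc]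
  gcongr

theorem prod_one_sub_div_le {c : ℝ} (hc : 0 < c) {Δ : ι → ℝ} (hΔ : ∀ i ∈ s, c ≤ Δ i) :
    ∏ i ∈ s, (1 - c / Δ i) ≤ (1 - c * #s / ∑ i ∈ s, Δ i) ^ #s := by
  have hΔpos : ∀ i ∈ s, 0 < Δ i := fun i hi ↦ hc.trans_le (hΔ i hi)
  have hfactor : ∀ i ∈ s, 0 ≤ 1 - c / Δ i := fun i hi ↦
    sub_nonneg.2 ((div_le_one (hΔpos i hi)).2 (hΔ i hi))
  calc ∏ i ∈ s, (1 - c / Δ i) ≤ ((∑ i ∈ s, (1 - c / Δ i)) / #s) ^ #s :=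
        prod_le_arith_mean_pow s hfactor
    _ ≤ (1 - c * #s / ∑ i ∈ s, Δ i) ^ #s :=
        pow_le_pow_left₀ (div_nonneg (sum_nonneg hfactor) (Nat.cast_nonneg _))
          (arith_mean_one_sub_div_le s hc.le hΔpos) _

end Real

theorem le_prod_range_of_le_mul {t a : ℕ → ℝ} (ht0 : t 0 ≤ 1) (ha : ∀ k, 0 ≤ a k)
    (hrec : ∀ k, 0 < t (k + 1) → t (k + 1) ≤ t k * a k) (n : ℕ) :
    t n ≤ ∏ k ∈ range n, a k := by
  induction n with
  | zero => simpa using ht0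
  | succ k ih =>
    rcases le_or_gt (t (k + 1)) 0 with hle | hpos
    · exact hle.trans (prod_nonneg fun j _ ↦ ha j)
    · rw [prod_range_succ]
      exact (hrec k hpos).trans (mul_le_mul_of_nonneg_right ih (ha k))

theorem stmt18_general (c : ℝ) (hc : 0 < c) (φ t : ℕ → ℝ)
    (ht0 : t 0 = 1)
    (hΔ : ∀ k, c < φ k - φ (k + 1))
    (hrec : ∀ k, 0 < t (k + 1) →
      t (k + 1) ≤ t k * (1 - c / (φ k - φ (k + 1)))) :
    ∀ k : ℕ, t (k + 1) ≤ (1 - c * (k + 1) / (φ 0 - φ (k + 1))) ^ (k + 1) := by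
  intro k
  have hfactor : ∀ j, 0 ≤ 1 - c / (φ j - φ (j + 1)) := fun j ↦
    sub_nonneg.2 ((div_le_one (hc.trans (hΔ j))).2 (hΔ j).le)
  calc t (k + 1) ≤ ∏ j ∈ range (k + 1), (1 - c / (φ j - φ (j + 1))) :=
        le_prod_range_of_le_mul ht0.le hfactor hrec _
    _ ≤ (1 - c * #(range (k + 1)) / ∑ j ∈ range (k + 1), (φ j - φ (j + 1))) ^ #(range (k + 1)) :=
        Real.prod_one_sub_div_le _ hc fun j _ ↦ (hΔ j).le
    _ = (1 - c * (k + 1) / (φ 0 - φ (k + 1))) ^ (k + 1) := by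
        rw [card_range, sum_range_sub']
        push_cast
        rfl

/-- for a strictly decreasing sequence `φ` with gaps
`Δ_k = φ k - φ (k+1) > c > 0` and nonnegative `t` with `t 0 = 1` and
`t (k+1) ≤ t k (1 - c/Δ_k)` whenever `t (k+1) > 0`, one has
`t (k+1) ≤ (1 - c(k+1)/(φ 0 - φ (k+1)))^(k+1)`. -/
theorem stmt18 (c : ℝ) (hc : 0 < c) (φ t : ℕ → ℝ)
    (ht0 : t 0 = 1) (htnn : ∀ k, 0 ≤ t k)
    (hΔ : ∀ k, c < φ k - φ (k + 1))
    (hrec : ∀ k, 0 < t (k + 1) →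
      t (k + 1) ≤ t k * (1 - c / (φ k - φ (k + 1)))) :
    ∀ k : ℕ, t (k + 1) ≤ (1 - c * (k + 1) / (φ 0 - φ (k + 1))) ^ (k + 1) :=
  stmt18_general c hc φ t ht0 hΔ hrec
end
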